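/- arXiv:1007.1400 — 2 statements merged into one kernel-verified Lean document; each statement's English description precedes it below -/
import Mathlib

section
/- Let γ : [τ₁,τ₂] → M be a smooth curve and suppose |Ric_{g(τ)}|_{g(τ)} ≤ C₀ and |R_{g(τ)}(x)| ≤ dC₀ for all x, τ. Then the 𝓛-functional of γ satisfies 𝓛(γ) ≥ (e^{−2C₀(τ₂−τ₁)}/(2(√τ₂ − √τ₁))) · ρ_{g(τ₂)}(γ(τ₁), γ(τ₂))² − (2/3) d C₀ (τ₂^{3/2} − τ₁^{3/2}), where ρ_{g(τ₂)} is the Riemannian distance at time τ₂. -/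
/-!
Split 𝓛 into its kinetic part `∫ √τ |γ̇|²` and its potential part `∫ √τ R`. Cauchy–Schwarz with
weight `√τ` gives `(∫ |γ̇|)² ≤ (∫ τ^{-1/2}) · ∫ √τ |γ̇|² = 2 (√τ₂ - √τ₁) ∫ √τ |γ̇|²`, and the
metric comparison bounds `ρ_{g(τ₂)}(γ(τ₁), γ(τ₂))` by `e^{C₀(τ₂-τ₁)} ∫ |γ̇|`. The potential part is at
least `-d C₀ ∫ √τ = -(2/3) d C₀ (τ₂^{3/2} - τ₁^{3/2})`.
-/

open MeasureTheory intervalIntegral Set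

section

variable {a b : ℝ}

theorem integral_sqrt :
    ∫ x in a..b, √x = (2 / 3) * (b ^ ((3 : ℝ) / 2) - a ^ ((3 : ℝ) / 2)) := by
  have hcongr : EqOn (fun x : ℝ => √x) (fun x => x ^ ((1 : ℝ) / 2)) (uIcc a b) :=
    fun x _ => Real.sqrt_eq_rpow x
  rw [integral_congr hcongr, integral_rpow (Or.inl (by norm_num))]
  norm_num
  ring

theorem inv_sqrt_eqOn_rpow (ha : 0 ≤ a) (hb : 0 ≤ b) :
    EqOn (fun x : ℝ => (√x)⁻¹) (fun x => x ^ (-(1 : ℝ) / 2)) (uIcc a b) := by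
  intro x hx
  have hx0 : 0 ≤ x := le_trans (le_min ha hb) hx.1
  simp only [neg_div, Real.rpow_neg hx0, Real.sqrt_eq_rpow]

theorem intervalIntegrable_inv_sqrt (ha : 0 ≤ a) (hb : 0 ≤ b) :
    IntervalIntegrable (fun x : ℝ => (√x)⁻¹) volume a b :=
  (intervalIntegrable_rpow' (r := -(1 : ℝ) / 2) (by norm_num)).congr
    ((inv_sqrt_eqOn_rpow ha hb).symm.mono uIoc_subset_uIcc)

theorem integral_inv_sqrt (ha : 0 ≤ a) (hb : 0 ≤ b) :
    ∫ x in a..b, (√x)⁻¹ = 2 * (√b - √a) := by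
  rw [integral_congr (inv_sqrt_eqOn_rpow ha hb), integral_rpow (Or.inl (by norm_num)),
    Real.sqrt_eq_rpow, Real.sqrt_eq_rpow]
  norm_num
  ring

theorem sq_integral_le_integral_inv_mul_integral_mul_sq {f w : ℝ → ℝ} (hab : a ≤ b)
    (hw : ∀ x ∈ Ioc a b, 0 < w x) (hf : IntervalIntegrable f volume a b)
    (hw_inv : IntervalIntegrable (fun x => (w x)⁻¹) volume a b)
    (hwf : IntervalIntegrable (fun x => w x * f x ^ 2) volume a b) :
    (∫ x in a..b, f x) ^ 2 ≤ (∫ x in a..b, (w x)⁻¹) * ∫ x in a..b, w x * f x ^ 2 := by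
  set F := ∫ x in a..b, f x
  set W := ∫ x in a..b, (w x)⁻¹
  set Q := ∫ x in a..b, w x * f x ^ 2
  -- The quadratic `c ↦ W c² - 2 F c + Q` is the integral of `(c - w f) ^ 2 / w ≥ 0`.
  have hquad : ∀ c : ℝ, 0 ≤ W * (c * c) + (-2 * F) * c + Q := by
    intro c
    have hint : ∫ x in a..b, ((w x)⁻¹ * (c * c) + (-2 * c) * f x + w x * f x ^ 2)
        = W * (c * c) + (-2 * F) * c + Q := by
      rw [integral_add ((hw_inv.mul_const _).add (hf.const_mul _)) hwf,
        integral_add (hw_inv.mul_const _) (hf.const_mul _), intervalIntegral.integral_mul_const,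
        intervalIntegral.integral_const_mul]
      ring
    rw [← hint, integral_of_le hab]
    refine setIntegral_nonneg measurableSet_Ioc fun x hx => ?_
    have hwx := hw x hx
    calc (0 : ℝ) ≤ (c - w x * f x) ^ 2 / w x := by positivity
      _ = _ := by field_simp; ring
  have := discrim_le_zero hquad
  rw [discrim] at this
  nlinarith

theorem sq_integral_div_le_integral_sqrt_mul_sq {f : ℝ → ℝ} (ha : 0 ≤ a) (hab : a ≤ b)
    (hf : ContinuousOn f (Icc a b)) :
    (∫ x in a..b, f x) ^ 2 / (2 * (√b - √a)) ≤ ∫ x in a..b, √x * f x ^ 2 := by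
  have hb := ha.trans hab
  have hCS := sq_integral_le_integral_inv_mul_integral_mul_sq hab
    (fun x hx => Real.sqrt_pos.2 (ha.trans_lt hx.1)) (hf.intervalIntegrable_of_Icc hab)
    (intervalIntegrable_inv_sqrt ha hb)
    ((Real.continuous_sqrt.continuousOn.mul (hf.pow 2)).intervalIntegrable_of_Icc hab)
  rw [integral_inv_sqrt ha hb] at hCS
  exact div_le_of_le_mul₀ (by linarith [Real.sqrt_le_sqrt hab])
    (integral_nonneg hab fun x _ => by positivity) (hCS.trans_eq (mul_comm _ _))

theorem neg_mul_integral_sqrt_le_integral_sqrt_mul {R : ℝ → ℝ} {K : ℝ} (hab : a ≤ b)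
    (hR : IntervalIntegrable (fun x => √x * R x) volume a b) (hK : ∀ x ∈ Icc a b, -K ≤ R x) :
    -K * ∫ x in a..b, √x ≤ ∫ x in a..b, √x * R x := by
  rw [← intervalIntegral.integral_const_mul]
  have hsqrt := Real.continuous_sqrt.intervalIntegrable (μ := volume) a b
  refine integral_mono_on hab (hsqrt.const_mul _) hR fun x hx => ?_
  rw [mul_comm]
  exact mul_le_mul_of_nonneg_left (hK x hx) (Real.sqrt_nonneg x)

end

theorem Real.exp_neg_two_mul_mul_sq_le {x y s : ℝ} (hx : 0 ≤ x) (h : x ≤ Real.exp s * y) :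
    Real.exp (-2 * s) * x ^ 2 ≤ y ^ 2 := by
  have h' : Real.exp (-s) * x ≤ y := by
    rwa [Real.exp_neg, inv_mul_le_iff₀ (Real.exp_pos s)]
  calc Real.exp (-2 * s) * x ^ 2 = (Real.exp (-s) * x) ^ 2 := by
        rw [mul_pow, ← Real.exp_nat_mul]; ring_nf
    _ ≤ y ^ 2 := pow_le_pow_left₀ (by positivity) h' 2

/-- Here `speed τ = |γ̇(τ)|_{g(τ)}`, `R τ = R_{g(τ)}(γ(τ))`, `dist` is the Riemannian distance
ρ_{g(τ₂)}, and `hlen` is the length comparison given by the metric comparison under |Ric| ≤ C₀. -/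
theorem L_functional_lower_bound_general {M : Type*} [PseudoMetricSpace M]
    (d : ℕ) (τ₁ τ₂ C₀ : ℝ)
    (h0 : 0 ≤ τ₁) (hτ : τ₁ < τ₂)
    (γ : ℝ → M) (speed R : ℝ → ℝ)
    (hspeed_cont : ContinuousOn speed (Set.Icc τ₁ τ₂))
    (hR_cont : ContinuousOn R (Set.Icc τ₁ τ₂))
    (hR : ∀ τ ∈ Set.Icc τ₁ τ₂, |R τ| ≤ (d : ℝ) * C₀)
    (hlen : dist (γ τ₁) (γ τ₂)
      ≤ Real.exp (C₀ * (τ₂ - τ₁)) * ∫ τ in τ₁..τ₂, speed τ) :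
    Real.exp (-2 * C₀ * (τ₂ - τ₁)) / (2 * (Real.sqrt τ₂ - Real.sqrt τ₁))
        * dist (γ τ₁) (γ τ₂) ^ 2
      - (2 / 3) * (d : ℝ) * C₀ * (τ₂ ^ ((3:ℝ)/2) - τ₁ ^ ((3:ℝ)/2))
    ≤ ∫ τ in τ₁..τ₂, Real.sqrt τ * (speed τ ^ 2 + R τ) := by
  have hsqrt := Real.continuous_sqrt.continuousOn (s := Icc τ₁ τ₂)
  have hkin_int := (hsqrt.mul (hspeed_cont.pow 2)).intervalIntegrable_of_Icc (μ := volume) hτ.le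
  have hpot_int := (hsqrt.mul hR_cont).intervalIntegrable_of_Icc (μ := volume) hτ.le
  have hkin := sq_integral_div_le_integral_sqrt_mul_sq h0 hτ.le hspeed_cont
  have hpot := neg_mul_integral_sqrt_le_integral_sqrt_mul hτ.le hpot_int
    fun τ hτ => neg_le_of_abs_le (hR τ hτ)
  have hdist := Real.exp_neg_two_mul_mul_sq_le dist_nonneg hlen
  rw [integral_sqrt] at hpot
  rw [← mul_assoc] at hdist
  have hΔ : 0 ≤ 2 * (√τ₂ - √τ₁) := by linarith [Real.sqrt_le_sqrt hτ.le]
  have hsplit : ∫ τ in τ₁..τ₂, √τ * (speed τ ^ 2 + R τ)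
      = (∫ τ in τ₁..τ₂, √τ * speed τ ^ 2) + ∫ τ in τ₁..τ₂, √τ * R τ := by
    simp only [mul_add]
    exact integral_add hkin_int hpot_int
  rw [hsplit, div_mul_eq_mul_div]
  linarith [div_le_div_of_nonneg_right hdist hΔ]

/-- Lower bound for the 𝓛-functional of a smooth curve γ, under the
curvature bounds |Ric| ≤ C₀ (giving the metric comparison used in `hlen`) and
|R| ≤ dC₀. Here `speed τ = |γ̇(τ)|_{g(τ)}`, `R τ = R_{g(τ)}(γ(τ))`, `dist` is the
Riemannian distance ρ_{g(τ₂)}, and the length comparison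
ρ_{g(τ₂)}(γ(τ₁), γ(τ₂)) ≤ e^{C₀(τ₂−τ₁)} ∫ speed comes from the metric comparison. -/
theorem L_functional_lower_bound {M : Type*} [PseudoMetricSpace M]
    (d : ℕ) (τ₁ τ₂ C₀ : ℝ)
    (h0 : 0 ≤ τ₁) (hτ : τ₁ < τ₂) (hC₀ : 0 ≤ C₀)
    (γ : ℝ → M) (speed R : ℝ → ℝ)
    (hspeed_nonneg : ∀ τ ∈ Set.Icc τ₁ τ₂, 0 ≤ speed τ)
    (hspeed_cont : ContinuousOn speed (Set.Icc τ₁ τ₂))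
    (hR_cont : ContinuousOn R (Set.Icc τ₁ τ₂))
    (hR : ∀ τ ∈ Set.Icc τ₁ τ₂, |R τ| ≤ (d : ℝ) * C₀)
    (hlen : dist (γ τ₁) (γ τ₂)
      ≤ Real.exp (C₀ * (τ₂ - τ₁)) * ∫ τ in τ₁..τ₂, speed τ) :
    Real.exp (-2 * C₀ * (τ₂ - τ₁)) / (2 * (Real.sqrt τ₂ - Real.sqrt τ₁))
        * dist (γ τ₁) (γ τ₂) ^ 2
      - (2 / 3) * (d : ℝ) * C₀ * (τ₂ ^ ((3:ℝ)/2) - τ₁ ^ ((3:ℝ)/2))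
    ≤ ∫ τ in τ₁..τ₂, Real.sqrt τ * (speed τ ^ 2 + R τ) :=
  L_functional_lower_bound_general d τ₁ τ₂ C₀ h0 hτ γ speed R hspeed_cont hR_cont hR hlen
end

section
/- Let W be the optimal transportation cost between probability measures μ, ν on a Polish space M×M with a lower semicontinuous cost c bounded below by a constant. If for every pair (x,y) there exist coupled random variables (X^x_t, Y^y_t) with the correct marginal laws (heat flows of δ_x, δ_y) such that E[c(X^x_t, Y^y_t)] ≤ Φ(x,y) for a measurable function Φ, and π is an optimal coupling of μ and ν for cost Φ, then W(μ_t, ν_t) ≤ ∫ Φ dπ, where μ_t, ν_t are the respective pushed-forward marginal laws at time t. -/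
open MeasureTheory

/-
Glue the couplings: `π.bind κ` first draws `(x, y) ∼ π` and then a pair from `κ (x, y)`. Its
marginals are `μ.bind P` and `ν.bind Q` because those of `κ (x, y)` are `P x` and `Q y`, so it is
an admissible coupling of the evolved measures, and integrating the pointwise bound
`∫ c ∂κ (x, y) ≤ Φ (x, y)` against `π` bounds its cost by `∫ Φ ∂π`. As `c` is bounded below,
this integration can be done for the nonnegative `c - Cl` with `lintegral`, where no
integrability has to be known in advance.
-/

namespace MeasureTheory.Measure

variable {α β γ δ : Type*} [MeasurableSpace α] [MeasurableSpace β] [MeasurableSpace γ]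
  [MeasurableSpace δ]

theorem map_bind (m : Measure α) {κ : α → Measure β} {f : β → γ} (hκ : Measurable κ)
    (hf : Measurable f) : (m.bind κ).map f = m.bind fun a ↦ (κ a).map f := by
  rw [bind, bind, ← join_map_map hf, map_map (measurable_map f hf) hκ]
  rfl

theorem bind_map (m : Measure α) {g : α → δ} {P : δ → Measure γ} (hg : Measurable g)
    (hP : Measurable P) : (m.map g).bind P = m.bind (P ∘ g) := by
  rw [bind, bind, map_map hP hg]

theorem map_bind_eq_bind_map (m : Measure α) {κ : α → Measure β} {f : β → γ} {g : α → δ}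
    {P : δ → Measure γ} (hκ : Measurable κ) (hf : Measurable f) (hg : Measurable g)
    (hP : Measurable P) (h : ∀ a, (κ a).map f = P (g a)) :
    (m.bind κ).map f = (m.map g).bind P := by
  rw [map_bind m hκ hf, bind_map m hg hP]
  exact congrArg m.bind (funext h)

end MeasureTheory.Measure

namespace MeasureTheory

variable {α β : Type*} [MeasurableSpace α] [MeasurableSpace β] {m : Measure α}
  {κ : α → Measure β} {f : β → ℝ} {g : α → ℝ}

theorem integral_sub_const [IsProbabilityMeasure m] (hg : Integrable g m) (C : ℝ) :
    ∫ a, (g a - C) ∂m = ∫ a, g a ∂m - C := by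
  simp [integral_sub hg (integrable_const C)]

theorem min_le_integral_of_forall_le [IsProbabilityMeasure m] {C : ℝ} (hC : ∀ a, C ≤ g a) :
    min C 0 ≤ ∫ a, g a ∂m := by
  by_cases hg : Integrable g m
  · have h := integral_mono (integrable_const C) hg hC
    simp only [integral_const, probReal_univ, one_smul] at h
    exact (min_le_left _ _).trans h
  · exact (integral_undef hg).symm ▸ min_le_right _ _

section Nonneg

variable (hκ : Measurable κ) (hf : Measurable f) (hf0 : 0 ≤ f) (hfi : ∀ a, Integrable f (κ a))
  (hg : Integrable g m) (hfg : ∀ a, ∫ x, f x ∂κ a ≤ g a)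
include hκ hf hf0 hfi hg hfg

theorem lintegral_ofReal_bind_le :
    ∫⁻ x, ENNReal.ofReal (f x) ∂m.bind κ ≤ ENNReal.ofReal (∫ a, g a ∂m) := by
  have hg0 : 0 ≤ᵐ[m] g := .of_forall fun a ↦ (integral_nonneg hf0).trans (hfg a)
  rw [Measure.lintegral_bind hκ.aemeasurable hf.ennreal_ofReal.aemeasurable,
    ofReal_integral_eq_lintegral_ofReal hg hg0]
  refine lintegral_mono fun a ↦ ?_
  rw [← ofReal_integral_eq_lintegral_ofReal (hfi a) (.of_forall hf0)]
  exact ENNReal.ofReal_le_ofReal (hfg a)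

theorem integrable_bind_of_nonneg : Integrable f (m.bind κ) :=
  ⟨hf.aestronglyMeasurable, (hasFiniteIntegral_iff_ofReal (.of_forall hf0)).2 <|
    (lintegral_ofReal_bind_le hκ hf hf0 hfi hg hfg).trans_lt ENNReal.ofReal_lt_top⟩

theorem integral_bind_le_of_nonneg : ∫ x, f x ∂m.bind κ ≤ ∫ a, g a ∂m := by
  rw [integral_eq_lintegral_of_nonneg_ae (.of_forall hf0) hf.aestronglyMeasurable]
  exact ENNReal.toReal_le_of_le_ofReal
    (integral_nonneg fun a ↦ (integral_nonneg hf0).trans (hfg a))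
    (lintegral_ofReal_bind_le hκ hf hf0 hfi hg hfg)

end Nonneg

theorem integral_bind_le_of_forall_le [IsProbabilityMeasure m] (hκ : Measurable κ)
    (hκprob : ∀ a, IsProbabilityMeasure (κ a)) (hf : Measurable f) {C : ℝ} (hC : ∀ x, C ≤ f x)
    (hfi : ∀ a, Integrable f (κ a)) (hg : Integrable g m) (hfg : ∀ a, ∫ x, f x ∂κ a ≤ g a) :
    ∫ x, f x ∂m.bind κ ≤ ∫ a, g a ∂m := by
  have : IsProbabilityMeasure (m.bind κ) :=
    isProbabilityMeasure_bind hκ.aemeasurable (.of_forall hκprob)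
  have hf0 : 0 ≤ fun x ↦ f x - C := fun x ↦ sub_nonneg.2 (hC x)
  have hfi' : ∀ a, Integrable (fun x ↦ f x - C) (κ a) := fun a ↦ (hfi a).sub (integrable_const C)
  have hfg' : ∀ a, ∫ x, (f x - C) ∂κ a ≤ g a - C := fun a ↦ by
    rw [integral_sub_const (hfi a)]
    linarith [hfg a]
  have hg' : Integrable (fun a ↦ g a - C) m := hg.sub (integrable_const C)
  have hbind : ∫ x, (f x - C) ∂m.bind κ ≤ ∫ a, (g a - C) ∂m :=
    integral_bind_le_of_nonneg hκ (hf.sub measurable_const) hf0 hfi' hg' hfg'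
  have hint : Integrable f (m.bind κ) := by
    simpa using (integrable_bind_of_nonneg hκ (hf.sub measurable_const) hf0 hfi' hg' hfg').add
      (integrable_const C)
  rw [integral_sub_const hint, integral_sub_const hg] at hbind
  linarith

end MeasureTheory

theorem transport_cost_contraction_general {M : Type*} [MeasurableSpace M]
    (c Φ : M × M → ℝ) (Cl : ℝ)
    (hc : Measurable c)
    (hlb : ∀ p, Cl ≤ c p)
    (P Q : M → Measure M) (hP : Measurable P) (hQ : Measurable Q)
    (μ ν : Measure M)
    (κ : M × M → Measure (M × M)) (hκ : Measurable κ)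
    (hκprob : ∀ p, IsProbabilityMeasure (κ p))
    (hκ1 : ∀ p : M × M, (κ p).map Prod.fst = P p.1)
    (hκ2 : ∀ p : M × M, (κ p).map Prod.snd = Q p.2)
    (hcint : ∀ p, Integrable c (κ p))
    (hcost : ∀ p, (∫ q, c q ∂(κ p)) ≤ Φ p)
    (π : Measure (M × M)) [IsProbabilityMeasure π]
    (hπ1 : π.map Prod.fst = μ) (hπ2 : π.map Prod.snd = ν)
    (hΦint : Integrable Φ π) :
    sInf {r : ℝ | ∃ π' : Measure (M × M), IsProbabilityMeasure π' ∧
        π'.map Prod.fst = μ.bind P ∧ π'.map Prod.snd = ν.bind Q ∧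
        r = ∫ q, c q ∂π'}
      ≤ ∫ p, Φ p ∂π := by
  have hglued : IsProbabilityMeasure (π.bind κ) :=
    isProbabilityMeasure_bind hκ.aemeasurable (.of_forall hκprob)
  have hfst : (π.bind κ).map Prod.fst = μ.bind P := hπ1 ▸
    Measure.map_bind_eq_bind_map π hκ measurable_fst measurable_fst hP hκ1
  have hsnd : (π.bind κ).map Prod.snd = ν.bind Q := hπ2 ▸
    Measure.map_bind_eq_bind_map π hκ measurable_snd measurable_snd hQ hκ2
  calc sInf _ ≤ ∫ q, c q ∂π.bind κ := csInf_le ?_ (by exact ⟨π.bind κ, hglued, hfst, hsnd, rfl⟩)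
    _ ≤ ∫ p, Φ p ∂π := integral_bind_le_of_forall_le hκ hκprob hc hlb hcint hΦint hcost
  refine ⟨min Cl 0, ?_⟩
  rintro _ ⟨π', hπ', -, -, rfl⟩
  exact min_le_integral_of_forall_le hlb

/-- Abstract transport argument: if for every pair (x,y) there is a
coupling κ(x,y) of the evolved measures P x and Q y with ∫ c dκ(x,y) ≤ Φ(x,y),
and π is a coupling of μ and ν, then the transportation cost between the evolved
measures μ.bind P and ν.bind Q is at most ∫ Φ dπ. -/
theorem transport_cost_contraction {M : Type*} [MeasurableSpace M]
    (c Φ : M × M → ℝ) (Cl : ℝ)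
    (hc : Measurable c) (hΦ : Measurable Φ)
    (hlb : ∀ p, Cl ≤ c p)
    (P Q : M → Measure M) (hP : Measurable P) (hQ : Measurable Q)
    (hPprob : ∀ x, IsProbabilityMeasure (P x))
    (hQprob : ∀ x, IsProbabilityMeasure (Q x))
    (μ ν : Measure M) [IsProbabilityMeasure μ] [IsProbabilityMeasure ν]
    (κ : M × M → Measure (M × M)) (hκ : Measurable κ)
    (hκprob : ∀ p, IsProbabilityMeasure (κ p))
    (hκ1 : ∀ p : M × M, (κ p).map Prod.fst = P p.1)
    (hκ2 : ∀ p : M × M, (κ p).map Prod.snd = Q p.2)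
    (hcint : ∀ p, Integrable c (κ p))
    (hcost : ∀ p, (∫ q, c q ∂(κ p)) ≤ Φ p)
    (π : Measure (M × M)) [IsProbabilityMeasure π]
    (hπ1 : π.map Prod.fst = μ) (hπ2 : π.map Prod.snd = ν)
    (hΦint : Integrable Φ π) :
    sInf {r : ℝ | ∃ π' : Measure (M × M), IsProbabilityMeasure π' ∧
        π'.map Prod.fst = μ.bind P ∧ π'.map Prod.snd = ν.bind Q ∧
        r = ∫ q, c q ∂π'}
      ≤ ∫ p, Φ p ∂π :=
  transport_cost_contraction_general c Φ Cl hc hlb P Q hP hQ μ ν κ hκ hκprob hκ1 hκ2 hcint hcost π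
    hπ1 hπ2 hΦint
end
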